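/- Let θ : [0,∞) → ℝ be defined by θ(x) = sin x for 0 ≤ x < 3π/4 and θ(x) = (e^{3π/4}/√2)·e^{−x} for x ≥ 3π/4, and let f : ℝ → ℝ be its odd extension. Then for every smooth compactly supported test function φ : ℝ → ℝ, one has ∫_ℝ f(x) φ''''(x) dx + √2·(φ'(3π/4) + φ(3π/4)) + √2·(φ'(−3π/4) − φ(−3π/4)) = ∫_ℝ f(x) φ(x) dx. (This is the weak formulation of the eigenvalue equation f'''' + q_s f = f with eigenvalue 1, where q_s is a compactly supported singular potential built from Dirac deltas and their derivatives at ±3π/4.) -/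

import Mathlib

open Real MeasureTheory

/-- The function `θ` from the paper: `sin x` on `[0, 3π/4)` and
`(e^{3π/4}/√2) e^{-x}` on `[3π/4, ∞)`. -/
noncomputable def theta (x : ℝ) : ℝ :=
  if x < 3 * π / 4 then Real.sin x
  else (Real.exp (3 * π / 4) / Real.sqrt 2) * Real.exp (-x)

/-- The odd extension `f` of `θ` to all of `ℝ`. -/
noncomputable def fOdd (x : ℝ) : ℝ :=
  if 0 ≤ x then theta x else -theta (-x)

lemma sin_3pi4 : Real.sin (3 * π / 4) = Real.sqrt 2 / 2 := by
  rw [show 3 * π / 4 = π - π / 4 by ring, Real.sin_pi_sub, Real.sin_pi_div_four]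

lemma cos_3pi4 : Real.cos (3 * π / 4) = -(Real.sqrt 2 / 2) := by
  rw [show 3 * π / 4 = π - π / 4 by ring, Real.cos_pi_sub, Real.cos_pi_div_four]

lemma A_exp_val : (Real.exp (3 * π / 4) / Real.sqrt 2) * Real.exp (-(3 * π / 4))
    = Real.sqrt 2 / 2 := by
  have h1 : Real.exp (3 * π / 4) * Real.exp (-(3 * π / 4)) = 1 := by
    have h0 : 3 * π / 4 + -(3 * π / 4) = 0 := by ring
    rw [← Real.exp_add, h0, Real.exp_zero]
  have h2 : Real.sqrt 2 * Real.sqrt 2 = 2 := Real.mul_self_sqrt (by norm_num)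
  have hs : Real.sqrt 2 ≠ 0 := by positivity
  rw [div_mul_eq_mul_div, h1, div_eq_div_iff hs (by norm_num : (2:ℝ) ≠ 0)]
  linarith [h2]

lemma a_pos : 0 < 3 * π / 4 := by positivity

lemma sin_neg_3pi4 : Real.sin (-(3 * π / 4)) = -(Real.sqrt 2 / 2) := by
  rw [Real.sin_neg, sin_3pi4]

lemma cos_neg_3pi4 : Real.cos (-(3 * π / 4)) = -(Real.sqrt 2 / 2) := by
  rw [Real.cos_neg, cos_3pi4]

lemma theta_eq (x : ℝ) : theta x =
    if 3 * π / 4 ≤ x then (Real.exp (3 * π / 4) / Real.sqrt 2) * Real.exp (-x)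
    else Real.sin x := by
  unfold theta
  rcases lt_or_ge x (3 * π / 4) with h | h
  · rw [if_pos h, if_neg (not_le.2 h)]
  · rw [if_neg (not_lt.2 h), if_pos h]

lemma theta_cont : Continuous theta := by
  have : theta = fun x => if (fun _ => 3 * π / 4) x ≤ id x then
      (Real.exp (3 * π / 4) / Real.sqrt 2) * Real.exp (-x) else Real.sin x :=
    funext fun x => theta_eq x
  rw [this]
  refine Continuous.if_le ?_ Real.continuous_sin continuous_const continuous_id ?_
  · exact continuous_const.mul (Real.continuous_exp.comp continuous_neg)
  · intro x hx
    rw [show x = 3 * π / 4 from hx.symm, A_exp_val, sin_3pi4]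

lemma fOdd_cont : Continuous fOdd := by
  have : fOdd = fun x => if (fun _ => (0:ℝ)) x ≤ id x then theta x else -theta (-x) := rfl
  rw [this]
  refine Continuous.if_le theta_cont ((theta_cont.comp continuous_neg).neg)
    continuous_const continuous_id ?_
  intro x hx
  rw [show x = 0 from hx.symm]
  simp [theta_eq, not_le.2 a_pos]

lemma fOdd_eq_sin {x : ℝ} (h1 : -(3 * π / 4) ≤ x) (h2 : x ≤ 3 * π / 4) :
    fOdd x = Real.sin x := by
  unfold fOdd
  rcases le_or_gt 0 x with hx | hx
  · rw [if_pos hx, theta_eq]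
    rcases lt_or_ge x (3 * π / 4) with h | h
    · rw [if_neg (not_le.2 h)]
    · have hxe : x = 3 * π / 4 := le_antisymm h2 h
      rw [if_pos h, hxe, A_exp_val, sin_3pi4]
  · rw [if_neg (not_le.2 hx), theta_eq]
    rcases lt_or_ge (-x) (3 * π / 4) with h | h
    · rw [if_neg (not_le.2 h), Real.sin_neg, neg_neg]
    · have hxe : x = -(3 * π / 4) := by linarith
      subst hxe
      rw [if_pos h]
      simp only [neg_neg]
      rw [A_exp_val, Real.sin_neg, sin_3pi4]

lemma fOdd_eq_exp {x : ℝ} (h : 3 * π / 4 ≤ x) :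
    fOdd x = (Real.exp (3 * π / 4) / Real.sqrt 2) * Real.exp (-x) := by
  have hx : (0:ℝ) ≤ x := le_trans (le_of_lt a_pos) h
  unfold fOdd
  rw [if_pos hx, theta_eq, if_pos h]

lemma fOdd_eq_negexp {x : ℝ} (h : x ≤ -(3 * π / 4)) :
    fOdd x = -((Real.exp (3 * π / 4) / Real.sqrt 2) * Real.exp x) := by
  have hx : ¬ (0:ℝ) ≤ x := by
    have := a_pos; push_neg; linarith
  unfold fOdd
  rw [if_neg hx, theta_eq, if_pos (by linarith), neg_neg]

/-- FTC helper lemma: if `g` satisfies `g'''' = g` (encoded by the cyclic derivative data),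
then integrating `g φ'''' - g φ` gives boundary terms. -/
lemma ftc_piece (g g1 g2 g3 : ℝ → ℝ) (φ : ℝ → ℝ) (hφ : ContDiff ℝ (⊤ : ℕ∞) φ)
    (hg : ∀ x, HasDerivAt g (g1 x) x) (hg1 : ∀ x, HasDerivAt g1 (g2 x) x)
    (hg2 : ∀ x, HasDerivAt g2 (g3 x) x) (hg3 : ∀ x, HasDerivAt g3 (g x) x)
    (hgc : Continuous g) (c d : ℝ) :
    ∫ x in c..d, (g x * deriv^[4] φ x - g x * φ x) =
      (g d * deriv^[3] φ d - g1 d * deriv^[2] φ d + g2 d * deriv φ d - g3 d * φ d)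
      - (g c * deriv^[3] φ c - g1 c * deriv^[2] φ c + g2 c * deriv φ c - g3 c * φ c) := by
  have hφ' : ContDiff ℝ ((⊤:ℕ∞) : WithTop ℕ∞) φ := hφ.of_le (by simp)
  have hck : ∀ k : ℕ, ContDiff ℝ ((⊤:ℕ∞) : WithTop ℕ∞) (deriv^[k] φ) :=
    fun k => hφ'.iterate_deriv k
  have hd : ∀ (k : ℕ) (x : ℝ), HasDerivAt (deriv^[k] φ) (deriv^[k+1] φ x) x := by
    intro k x
    have h1 := ((hck k).differentiable (by simp)).differentiableAt (x := x)
    rw [Function.iterate_succ_apply']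
    exact h1.hasDerivAt
  have key := intervalIntegral.integral_eq_sub_of_hasDerivAt
    (f := fun x => g x * deriv^[3] φ x - g1 x * deriv^[2] φ x
      + g2 x * deriv^[1] φ x - g3 x * deriv^[0] φ x)
    (f' := fun x => g x * deriv^[4] φ x - g x * φ x) (a := c) (b := d)
    ?_ ?_
  · rw [key]
    simp only [Function.iterate_one, Function.iterate_zero, id]
  · intro x _
    have H := ((((hg x).fun_mul (hd 3 x)).fun_sub ((hg1 x).fun_mul (hd 2 x))).fun_add
      ((hg2 x).fun_mul (hd 1 x))).fun_sub ((hg3 x).fun_mul (hd 0 x))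
    refine H.congr_deriv ?_
    simp only [Function.iterate_one, Function.iterate_zero, id, Nat.reduceAdd]
    ring
  · exact ((hgc.mul (hck 4).continuous).sub (hgc.mul hφ.continuous)).intervalIntegrable c d

/-- Weak form of the eigenvalue equation `f'''' + q_s f = f` with eigenvalue `1`,
where `q_s` is built from Dirac deltas and their derivatives at `±3π/4`. -/
theorem stmt_2 :
    ∀ φ : ℝ → ℝ, ContDiff ℝ (⊤ : ℕ∞) φ → HasCompactSupport φ →
      (∫ x : ℝ, fOdd x * iteratedDeriv 4 φ x)
        + Real.sqrt 2 * (deriv φ (3 * π / 4) + φ (3 * π / 4))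
        + Real.sqrt 2 * (deriv φ (-(3 * π / 4)) - φ (-(3 * π / 4)))
      = ∫ x : ℝ, fOdd x * φ x := by
  intro φ hφ hsupp
  have hφ' : ContDiff ℝ ((⊤:ℕ∞) : WithTop ℕ∞) φ := hφ.of_le (by simp)
  have hck : ∀ k : ℕ, ContDiff ℝ ((⊤:ℕ∞) : WithTop ℕ∞) (deriv^[k] φ) :=
    fun k => hφ'.iterate_deriv k
  -- iterated derivatives have support inside `tsupport φ`
  have hts : ∀ k : ℕ, tsupport (deriv^[k] φ) ⊆ tsupport φ := by
    intro k
    induction k with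
    | zero => simp
    | succ n ih =>
      rw [Function.iterate_succ']
      exact le_trans (closure_minimal support_deriv_subset (isClosed_tsupport _)) ih
  obtain ⟨M, hM⟩ := (IsCompact.isBounded hsupp).subset_closedBall 0
  set R : ℝ := max M (3 * π / 4) + 1 with hRdef
  have hRa : 3 * π / 4 < R := by
    have := le_max_right M (3 * π / 4); simp only [hRdef]; linarith
  have hRpos : 0 < R := lt_trans a_pos hRa
  have hzero : ∀ (k : ℕ) (x : ℝ), R ≤ |x| → deriv^[k] φ x = 0 := by
    intro k x hx
    apply image_eq_zero_of_notMem_tsupport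
    intro hmem
    have h1 := hM (hts k hmem)
    rw [Metric.mem_closedBall, Real.dist_eq, sub_zero] at h1
    have h2 := le_max_left M (3 * π / 4)
    simp only [hRdef] at hx
    linarith
  have hcontk : ∀ k : ℕ, Continuous (deriv^[k] φ) := fun k => (hck k).continuous
  -- reduction of the full-line integral to three pieces
  have main : ∀ ψ : ℝ → ℝ, Continuous ψ → (∀ x : ℝ, R ≤ |x| → ψ x = 0) →
      (∫ x : ℝ, fOdd x * ψ x) =
        (∫ x in (-R)..(-(3 * π / 4)),
            (-((Real.exp (3 * π / 4) / Real.sqrt 2) * Real.exp x)) * ψ x)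
        + (∫ x in (-(3 * π / 4))..(3 * π / 4), Real.sin x * ψ x)
        + (∫ x in (3 * π / 4)..R,
            ((Real.exp (3 * π / 4) / Real.sqrt 2) * Real.exp (-x)) * ψ x) := by
    intro ψ hψc hψz
    have hii : ∀ c d : ℝ, IntervalIntegrable (fun x => fOdd x * ψ x) volume c d :=
      fun c d => (fOdd_cont.mul hψc).intervalIntegrable c d
    have step1 : (∫ x : ℝ, fOdd x * ψ x) = ∫ x in (-R)..R, fOdd x * ψ x := by
      rw [intervalIntegral.integral_of_le (by linarith : -R ≤ R)]
      refine (setIntegral_eq_integral_of_forall_compl_eq_zero fun x hx => ?_).symm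
      have hx' : x ≤ -R ∨ R < x := by
        simp only [Set.mem_Ioc, not_and_or, not_lt, not_le] at hx
        exact hx
      have : R ≤ |x| := by
        rcases hx' with h | h
        · rw [abs_of_nonpos (by linarith)]; linarith
        · rw [abs_of_pos (by linarith)]; linarith
      rw [hψz x this, mul_zero]
    have e1 := intervalIntegral.integral_add_adjacent_intervals
      (hii (-R) (-(3 * π / 4))) (hii (-(3 * π / 4)) (3 * π / 4))
    have e2 := intervalIntegral.integral_add_adjacent_intervals
      (hii (-R) (3 * π / 4)) (hii (3 * π / 4) R)
    have c1 : (∫ x in (-R)..(-(3 * π / 4)), fOdd x * ψ x) =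
        ∫ x in (-R)..(-(3 * π / 4)),
          (-((Real.exp (3 * π / 4) / Real.sqrt 2) * Real.exp x)) * ψ x := by
      refine intervalIntegral.integral_congr fun x hx => ?_
      rw [Set.uIcc_of_le (by linarith)] at hx
      rw [fOdd_eq_negexp hx.2]
    have c2 : (∫ x in (-(3 * π / 4))..(3 * π / 4), fOdd x * ψ x) =
        ∫ x in (-(3 * π / 4))..(3 * π / 4), Real.sin x * ψ x := by
      refine intervalIntegral.integral_congr fun x hx => ?_
      rw [Set.uIcc_of_le (by linarith [a_pos])] at hx
      rw [fOdd_eq_sin hx.1 hx.2]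
    have c3 : (∫ x in (3 * π / 4)..R, fOdd x * ψ x) =
        ∫ x in (3 * π / 4)..R,
          ((Real.exp (3 * π / 4) / Real.sqrt 2) * Real.exp (-x)) * ψ x := by
      refine intervalIntegral.integral_congr fun x hx => ?_
      rw [Set.uIcc_of_le (by linarith)] at hx
      rw [fOdd_eq_exp hx.1]
    rw [step1, ← e2, ← e1, c1, c2, c3]
  -- rewrite the integrals
  simp only [iteratedDeriv_eq_iterate]
  rw [main (deriv^[4] φ) (hcontk 4) (hzero 4),
    main φ hφ.continuous (fun x hx => by
      have := hzero 0 x hx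
      simpa using this)]
  -- FTC on each piece
  have hgneg : ∀ x : ℝ, HasDerivAt
      (fun x => -((Real.exp (3 * π / 4) / Real.sqrt 2) * Real.exp x))
      (-((Real.exp (3 * π / 4) / Real.sqrt 2) * Real.exp x)) x :=
    fun x => ((Real.hasDerivAt_exp x).const_mul _).neg
  have hgexp : ∀ x : ℝ, HasDerivAt
      (fun x => (Real.exp (3 * π / 4) / Real.sqrt 2) * Real.exp (-x))
      (-((Real.exp (3 * π / 4) / Real.sqrt 2) * Real.exp (-x))) x := by
    intro x
    have h := ((hasDerivAt_neg x).exp).const_mul (Real.exp (3 * π / 4) / Real.sqrt 2)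
    exact h.congr_deriv (by ring)
  have hgexp' : ∀ x : ℝ, HasDerivAt
      (fun x => -((Real.exp (3 * π / 4) / Real.sqrt 2) * Real.exp (-x)))
      ((Real.exp (3 * π / 4) / Real.sqrt 2) * Real.exp (-x)) x := by
    intro x; simpa using (hgexp x).fun_neg
  have hcneg : Continuous fun x : ℝ =>
      -((Real.exp (3 * π / 4) / Real.sqrt 2) * Real.exp x) :=
    (continuous_const.mul Real.continuous_exp).neg
  have hcexp : Continuous fun x : ℝ =>
      (Real.exp (3 * π / 4) / Real.sqrt 2) * Real.exp (-x) :=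
    continuous_const.mul (Real.continuous_exp.comp continuous_neg)
  have hiig : ∀ (g : ℝ → ℝ), Continuous g → ∀ (k : ℕ) (c d : ℝ),
      IntervalIntegrable (fun x => g x * deriv^[k] φ x) volume c d :=
    fun g hg k c d => (hg.mul (hcontk k)).intervalIntegrable c d
  -- piece 1 : -(A e^x) on [-R, -a]
  have F1 := ftc_piece
    (fun x => -((Real.exp (3 * π / 4) / Real.sqrt 2) * Real.exp x))
    (fun x => -((Real.exp (3 * π / 4) / Real.sqrt 2) * Real.exp x))
    (fun x => -((Real.exp (3 * π / 4) / Real.sqrt 2) * Real.exp x))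
    (fun x => -((Real.exp (3 * π / 4) / Real.sqrt 2) * Real.exp x))
    φ hφ hgneg hgneg hgneg hgneg hcneg (-R) (-(3 * π / 4))
  -- piece 2 : sin on [-a, a]
  have F2 := ftc_piece Real.sin Real.cos (fun x => -Real.sin x) (fun x => -Real.cos x)
    φ hφ (fun x => Real.hasDerivAt_sin x) (fun x => Real.hasDerivAt_cos x)
    (fun x => (Real.hasDerivAt_sin x).neg)
    (fun x => by simpa using (Real.hasDerivAt_cos x).fun_neg)
    Real.continuous_sin (-(3 * π / 4)) (3 * π / 4)
  -- piece 3 : A e^{-x} on [a, R]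
  have F3 := ftc_piece
    (fun x => (Real.exp (3 * π / 4) / Real.sqrt 2) * Real.exp (-x))
    (fun x => -((Real.exp (3 * π / 4) / Real.sqrt 2) * Real.exp (-x)))
    (fun x => (Real.exp (3 * π / 4) / Real.sqrt 2) * Real.exp (-x))
    (fun x => -((Real.exp (3 * π / 4) / Real.sqrt 2) * Real.exp (-x)))
    φ hφ hgexp hgexp' hgexp hgexp' hcexp (3 * π / 4) R
  rw [intervalIntegral.integral_sub (hiig _ hcneg 4 _ _) ((hcneg.fun_mul hφ.continuous).intervalIntegrable _ _)] at F1
  rw [intervalIntegral.integral_sub (hiig _ Real.continuous_sin 4 _ _)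
    ((Real.continuous_sin.fun_mul hφ.continuous).intervalIntegrable _ _)] at F2
  rw [intervalIntegral.integral_sub (hiig _ hcexp 4 _ _) ((hcexp.fun_mul hφ.continuous).intervalIntegrable _ _)] at F3
  -- boundary values at ±R vanish
  have z3R : deriv^[3] φ R = 0 := hzero 3 R (by rw [abs_of_pos hRpos])
  have z2R : deriv^[2] φ R = 0 := hzero 2 R (by rw [abs_of_pos hRpos])
  have z1R : deriv φ R = 0 := by
    have := hzero 1 R (by rw [abs_of_pos hRpos]); simpa using this
  have z0R : φ R = 0 := by
    have := hzero 0 R (by rw [abs_of_pos hRpos]); simpa using this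
  have z3R' : deriv^[3] φ (-R) = 0 := hzero 3 (-R) (by rw [abs_neg, abs_of_pos hRpos])
  have z2R' : deriv^[2] φ (-R) = 0 := hzero 2 (-R) (by rw [abs_neg, abs_of_pos hRpos])
  have z1R' : deriv φ (-R) = 0 := by
    have := hzero 1 (-R) (by rw [abs_neg, abs_of_pos hRpos]); simpa using this
  have z0R' : φ (-R) = 0 := by
    have := hzero 0 (-R) (by rw [abs_neg, abs_of_pos hRpos]); simpa using this
  simp only [z3R', z2R', z1R', z0R', mul_zero, sub_zero, add_zero, zero_sub,
    neg_zero, A_exp_val, sin_neg_3pi4, cos_neg_3pi4, sin_3pi4, cos_3pi4] at F1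
  simp only [sin_neg_3pi4, cos_neg_3pi4, sin_3pi4, cos_3pi4] at F2
  simp only [z3R, z2R, z1R, z0R, mul_zero, sub_zero, add_zero, zero_sub,
    neg_zero, A_exp_val] at F3
  linarith [F1, F2, F3]
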